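/- Let A be an associative unital algebra over ℂ with a full comultiplication Δ. If there exist a faithful left integral and a faithful right integral on A, then the four linear maps on A ⊗ A determined by a ⊗ b ↦ Δ(a)(1 ⊗ b), a ⊗ b ↦ Δ(a)(b ⊗ 1), a ⊗ b ↦ (a ⊗ 1)Δ(b), and a ⊗ b ↦ (1 ⊗ a)Δ(b) are all surjective. -/
import Mathlib


open TensorProduct

set_option maxHeartbeats 1000000
set_option synthInstance.maxHeartbeats 200000

noncomputable section

variable {A : Type*} [Ring A] [Algebra ℂ A]

/-- The slice map `id ⊗ ω : A ⊗ A → A`. -/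
def sliceR (ω : A →ₗ[ℂ] ℂ) : A ⊗[ℂ] A →ₗ[ℂ] A :=
  (TensorProduct.rid ℂ A).toLinearMap ∘ₗ TensorProduct.map LinearMap.id ω

/-- The slice map `ω ⊗ id : A ⊗ A → A`. -/
def sliceL (ω : A →ₗ[ℂ] ℂ) : A ⊗[ℂ] A →ₗ[ℂ] A :=
  (TensorProduct.lid ℂ A).toLinearMap ∘ₗ TensorProduct.map ω LinearMap.id

/-- Coassociativity of a comultiplication `Δ : A → A ⊗ A`:
`(Δ ⊗ id) ∘ Δ = (id ⊗ Δ) ∘ Δ` (up to the associator). -/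
def IsCoassoc (Δ : A →ₐ[ℂ] A ⊗[ℂ] A) : Prop :=
  ∀ a : A,
    TensorProduct.assoc ℂ A A A (TensorProduct.map Δ.toLinearMap LinearMap.id (Δ a)) =
      TensorProduct.map LinearMap.id Δ.toLinearMap (Δ a)

/-- A left integral: a nonzero functional with `(id ⊗ φ)(Δ a) = φ(a)·1` for all `a`. -/
def IsLeftIntegral (Δ : A →ₐ[ℂ] A ⊗[ℂ] A) (φ : A →ₗ[ℂ] ℂ) : Prop :=
  φ ≠ 0 ∧ ∀ a : A, sliceR φ (Δ a) = φ a • (1 : A)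

/-- A right integral: a nonzero functional with `(ψ ⊗ id)(Δ a) = ψ(a)·1` for all `a`. -/
def IsRightIntegral (Δ : A →ₐ[ℂ] A ⊗[ℂ] A) (ψ : A →ₗ[ℂ] ℂ) : Prop :=
  ψ ≠ 0 ∧ ∀ a : A, sliceL ψ (Δ a) = ψ a • (1 : A)

/-- A faithful functional: the bilinear form `(a, b) ↦ ω(ab)` is non-degenerate. -/
def IsFaithful (ω : A →ₗ[ℂ] ℂ) : Prop :=
  (∀ b : A, (∀ a : A, ω (a * b) = 0) → b = 0) ∧
  (∀ b : A, (∀ a : A, ω (b * a) = 0) → b = 0)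

/-- The left leg of an element `x ∈ A ⊗ A`: the span of `{(id ⊗ ω)(x) : ω ∈ A*}`. -/
def leftLegOf (x : A ⊗[ℂ] A) : Submodule ℂ A :=
  Submodule.span ℂ {y : A | ∃ ω : A →ₗ[ℂ] ℂ, y = sliceR ω x}

/-- The right leg of an element `x ∈ A ⊗ A`: the span of `{(ω ⊗ id)(x) : ω ∈ A*}`. -/
def rightLegOf (x : A ⊗[ℂ] A) : Submodule ℂ A :=
  Submodule.span ℂ {y : A | ∃ ω : A →ₗ[ℂ] ℂ, y = sliceL ω x}

/-- The left leg of `Δ`: the span of `{(id ⊗ ω)(Δ a) : a ∈ A, ω ∈ A*}`. -/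
def leftLeg (Δ : A →ₐ[ℂ] A ⊗[ℂ] A) : Submodule ℂ A :=
  Submodule.span ℂ {y : A | ∃ (a : A) (ω : A →ₗ[ℂ] ℂ), y = sliceR ω (Δ a)}

/-- The right leg of `Δ`: the span of `{(ω ⊗ id)(Δ a) : a ∈ A, ω ∈ A*}`. -/
def rightLeg (Δ : A →ₐ[ℂ] A ⊗[ℂ] A) : Submodule ℂ A :=
  Submodule.span ℂ {y : A | ∃ (a : A) (ω : A →ₗ[ℂ] ℂ), y = sliceL ω (Δ a)}

/-- A comultiplication is full if both of its legs are all of `A`. -/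
def IsFull (Δ : A →ₐ[ℂ] A ⊗[ℂ] A) : Prop :=
  leftLeg Δ = ⊤ ∧ rightLeg Δ = ⊤

/-- The linear map `T₁` with `T₁ (a ⊗ b) = Δ(a) * (1 ⊗ b)`. -/
def T1 (Δ : A →ₐ[ℂ] A ⊗[ℂ] A) : A ⊗[ℂ] A →ₗ[ℂ] A ⊗[ℂ] A :=
  LinearMap.mul' ℂ (A ⊗[ℂ] A) ∘ₗ
    TensorProduct.map Δ.toLinearMap (TensorProduct.mk ℂ A A 1)

/-- The linear map `T₁'` with `T₁' (a ⊗ b) = Δ(a) * (b ⊗ 1)`. -/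
def T1' (Δ : A →ₐ[ℂ] A ⊗[ℂ] A) : A ⊗[ℂ] A →ₗ[ℂ] A ⊗[ℂ] A :=
  LinearMap.mul' ℂ (A ⊗[ℂ] A) ∘ₗ
    TensorProduct.map Δ.toLinearMap ((TensorProduct.mk ℂ A A).flip 1)

/-- The linear map `T₂` with `T₂ (a ⊗ b) = (a ⊗ 1) * Δ(b)`. -/
def T2 (Δ : A →ₐ[ℂ] A ⊗[ℂ] A) : A ⊗[ℂ] A →ₗ[ℂ] A ⊗[ℂ] A :=
  LinearMap.mul' ℂ (A ⊗[ℂ] A) ∘ₗ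
    TensorProduct.map ((TensorProduct.mk ℂ A A).flip 1) Δ.toLinearMap

/-- The linear map `T₂'` with `T₂' (a ⊗ b) = (1 ⊗ a) * Δ(b)`. -/
def T2' (Δ : A →ₐ[ℂ] A ⊗[ℂ] A) : A ⊗[ℂ] A →ₗ[ℂ] A ⊗[ℂ] A :=
  LinearMap.mul' ℂ (A ⊗[ℂ] A) ∘ₗ
    TensorProduct.map (TensorProduct.mk ℂ A A 1) Δ.toLinearMap

/-- A left cointegral: a nonzero element `h` with `Δ(a)(1 ⊗ h) = a ⊗ h` for all `a`. -/
def IsLeftCointegral (Δ : A →ₐ[ℂ] A ⊗[ℂ] A) (h : A) : Prop :=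
  h ≠ 0 ∧ ∀ a : A, Δ a * ((1 : A) ⊗ₜ[ℂ] h) = a ⊗ₜ[ℂ] h

/-- A right cointegral: a nonzero element `k` with `(k ⊗ 1)Δ(a) = k ⊗ a` for all `a`. -/
def IsRightCointegral (Δ : A →ₐ[ℂ] A ⊗[ℂ] A) (k : A) : Prop :=
  k ≠ 0 ∧ ∀ a : A, (k ⊗ₜ[ℂ] (1 : A)) * Δ a = k ⊗ₜ[ℂ] a

/-- `Δ₁₃(a) = (1 ⊗ σ)(Δ(a) ⊗ 1)`, viewed in `A ⊗ (A ⊗ A)`. -/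
def delta13 (Δ : A →ₐ[ℂ] A ⊗[ℂ] A) (a : A) : A ⊗[ℂ] (A ⊗[ℂ] A) :=
  TensorProduct.map LinearMap.id (TensorProduct.comm ℂ A A).toLinearMap
    (TensorProduct.assoc ℂ A A A (Δ a ⊗ₜ[ℂ] (1 : A)))


lemma sliceR_tmul (ω : A →ₗ[ℂ] ℂ) (u v : A) : sliceR ω (u ⊗ₜ[ℂ] v) = ω v • u := by
  simp [sliceR]

lemma sliceL_tmul (ω : A →ₗ[ℂ] ℂ) (u v : A) : sliceL ω (u ⊗ₜ[ℂ] v) = ω u • v := by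
  simp [sliceL]

lemma span_eq_top_of_dual {M : Type*} [AddCommGroup M] [Module ℂ M] (S : Set M)
    (h : ∀ χ : M →ₗ[ℂ] ℂ, (∀ s ∈ S, χ s = 0) → χ = 0) : Submodule.span ℂ S = ⊤ := by
  rw [Submodule.eq_top_iff']
  intro x
  set p := Submodule.span ℂ S with hp
  rw [← Submodule.Quotient.mk_eq_zero p, ← Module.forall_dual_apply_eq_zero_iff ℂ]
  intro f
  have hf : (f ∘ₗ p.mkQ) = 0 := by
    apply h
    intro s hs
    have : (s : M) ∈ p := Submodule.subset_span hs
    have hz : (Submodule.Quotient.mk s : M ⧸ p) = 0 := (Submodule.Quotient.mk_eq_zero p).mpr this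
    simp [hz]
  have := LinearMap.congr_fun hf x
  simpa using this

lemma slice_swap (χ ω : A →ₗ[ℂ] ℂ) (X : A ⊗[ℂ] A) : χ (sliceR ω X) = ω (sliceL χ X) := by
  induction X using TensorProduct.induction_on with
  | zero => simp
  | tmul u v => simp [sliceR_tmul, sliceL_tmul, mul_comm]
  | add s t hs ht => simp [hs, ht]

lemma T1_apply (Δ : A →ₐ[ℂ] A ⊗[ℂ] A) (a b : A) :
    T1 Δ (a ⊗ₜ[ℂ] b) = Δ a * ((1 : A) ⊗ₜ[ℂ] b) := by
  simp [T1, LinearMap.mul'_apply]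

lemma T1_surjective (Δ : A →ₐ[ℂ] A ⊗[ℂ] A) (hΔ : IsCoassoc Δ) (hfull : IsFull Δ)
    (φ : A →ₗ[ℂ] ℂ) (hφ : IsLeftIntegral Δ φ) (hφf : IsFaithful φ) :
    Function.Surjective (T1 Δ) := by
  rw [← LinearMap.range_eq_top]
  set R := LinearMap.range (T1 Δ) with hRdef
  have h5core : ∀ (Y : A ⊗[ℂ] A) (v r s : A),
      TensorProduct.map LinearMap.id (sliceR φ)
        ((TensorProduct.assoc ℂ A A A (Y ⊗ₜ[ℂ] v)) * ((1:A) ⊗ₜ[ℂ] (r ⊗ₜ[ℂ] s)))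
        = φ (v * s) • (Y * ((1:A) ⊗ₜ[ℂ] r)) := by
    intro Y v r s
    induction Y using TensorProduct.induction_on with
    | zero => simp
    | tmul y1 y2 =>
        simp [Algebra.TensorProduct.tmul_mul_tmul, sliceR_tmul, tmul_smul, smul_tmul',
          TensorProduct.assoc_tmul]
    | add s' t hs ht =>
        simp only [add_tmul, map_add, add_mul, hs, ht, smul_add]
  have key5 : ∀ X Q : A ⊗[ℂ] A,
      TensorProduct.map LinearMap.id (sliceR φ)
        ((TensorProduct.assoc ℂ A A A
            (TensorProduct.map Δ.toLinearMap LinearMap.id X)) * ((1:A) ⊗ₜ[ℂ] Q)) ∈ R := by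
    intro X Q
    induction X using TensorProduct.induction_on with
    | zero => simpa using R.zero_mem
    | tmul u v =>
        induction Q using TensorProduct.induction_on with
        | zero => simpa using R.zero_mem
        | tmul r s =>
            rw [TensorProduct.map_tmul]
            simp only [LinearMap.id_coe, id_eq, AlgHom.toLinearMap_apply]
            rw [h5core (Δ u) v r s]
            exact R.smul_mem _ (LinearMap.mem_range.mpr ⟨u ⊗ₜ[ℂ] r, T1_apply Δ u r⟩)
        | add q1 q2 hq1 hq2 =>
            rw [TensorProduct.tmul_add, mul_add, map_add]
            exact R.add_mem hq1 hq2
    | add x1 x2 h1 h2 =>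
        rw [map_add, map_add, add_mul, map_add]
        exact R.add_mem h1 h2
  have hcol : ∀ X : A ⊗[ℂ] A,
      TensorProduct.map LinearMap.id (sliceR φ)
        (TensorProduct.map LinearMap.id Δ.toLinearMap X) = (sliceR φ X) ⊗ₜ[ℂ] (1:A) := by
    intro X
    induction X using TensorProduct.induction_on with
    | zero => simp
    | tmul u v =>
        rw [TensorProduct.map_tmul, TensorProduct.map_tmul]
        simp only [LinearMap.id_coe, id_eq, AlgHom.toLinearMap_apply]
        rw [hφ.2 v, sliceR_tmul, tmul_smul, smul_tmul']
    | add x1 x2 h1 h2 => rw [map_add, map_add, h1, h2, map_add, add_tmul]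
  have hmul : ∀ (X : A ⊗[ℂ] A) (q : A),
      TensorProduct.map LinearMap.id Δ.toLinearMap (X * ((1:A) ⊗ₜ[ℂ] q))
        = TensorProduct.map LinearMap.id Δ.toLinearMap X * ((1:A) ⊗ₜ[ℂ] (Δ q : A ⊗[ℂ] A)) := by
    intro X q
    induction X using TensorProduct.induction_on with
    | zero => simp
    | tmul u v =>
        rw [Algebra.TensorProduct.tmul_mul_tmul, TensorProduct.map_tmul, TensorProduct.map_tmul]
        simp only [LinearMap.id_coe, id_eq, AlgHom.toLinearMap_apply]
        rw [map_mul, Algebra.TensorProduct.tmul_mul_tmul]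
    | add x1 x2 h1 h2 => rw [add_mul, map_add, h1, h2, map_add, add_mul]
  have hgen : ∀ x q : A, (sliceR φ (Δ x * ((1:A) ⊗ₜ[ℂ] q))) ⊗ₜ[ℂ] (1:A) ∈ R := by
    intro x q
    rw [← hcol, hmul, ← hΔ x]
    exact key5 (Δ x) (Δ q)
  have hspan : Submodule.span ℂ
      {y : A | ∃ x q : A, y = sliceR φ (Δ x * ((1:A) ⊗ₜ[ℂ] q))} = ⊤ := by
    apply span_eq_top_of_dual
    intro χ hχ
    have h1 : ∀ (X : A ⊗[ℂ] A) (q : A),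
        χ (sliceR φ (X * ((1:A) ⊗ₜ[ℂ] q))) = φ (sliceL χ X * q) := by
      intro X q
      induction X using TensorProduct.induction_on with
      | zero => simp
      | tmul u v =>
          rw [Algebra.TensorProduct.tmul_mul_tmul, sliceR_tmul, sliceL_tmul]
          simp [smul_mul_assoc, mul_comm]
      | add x1 x2 hx1 hx2 => rw [add_mul, map_add, map_add, hx1, hx2,
          map_add, add_mul, map_add]
    have h2 : ∀ x : A, sliceL χ (Δ x) = 0 := by
      intro x
      apply hφf.2
      intro q
      rw [← h1]
      exact hχ _ ⟨x, q, rfl⟩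
    have hker : Submodule.span ℂ
        {y : A | ∃ (a : A) (ω : A →ₗ[ℂ] ℂ), y = sliceR ω (Δ a)} ≤ LinearMap.ker χ := by
      rw [Submodule.span_le]
      rintro y ⟨x, ω, rfl⟩
      simp [LinearMap.mem_ker, slice_swap, h2 x]
    refine LinearMap.ext fun a => ?_
    have ha : a ∈ leftLeg Δ := by rw [hfull.1]; trivial
    simpa using hker ha
  have hclosure : ∀ (t : A ⊗[ℂ] A) (y : A),
      T1 Δ (t * ((1:A) ⊗ₜ[ℂ] y)) = T1 Δ t * ((1:A) ⊗ₜ[ℂ] y) := by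
    intro t y
    induction t using TensorProduct.induction_on with
    | zero => simp
    | tmul a b =>
        rw [Algebra.TensorProduct.tmul_mul_tmul, mul_one, T1_apply, T1_apply,
          mul_assoc, Algebra.TensorProduct.tmul_mul_tmul, one_mul]
    | add t1 t2 h1 h2 => rw [add_mul, map_add, h1, h2, map_add, add_mul]
  rw [Submodule.eq_top_iff']
  intro z
  induction z using TensorProduct.induction_on with
  | zero => exact R.zero_mem
  | tmul a y =>
      have hmem : a ∈ Submodule.span ℂ
          {y : A | ∃ x q : A, y = sliceR φ (Δ x * ((1:A) ⊗ₜ[ℂ] q))} := by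
        rw [hspan]; trivial
      have ha : a ⊗ₜ[ℂ] (1:A) ∈ R := by
        refine Submodule.span_induction ?_ ?_ ?_ ?_ hmem
        · rintro s ⟨x, q, rfl⟩; exact hgen x q
        · simpa using R.zero_mem
        · intro x y _ _ hx hy; rw [add_tmul]; exact R.add_mem hx hy
        · intro c x _ hx; rw [← smul_tmul']; exact R.smul_mem c hx
      obtain ⟨t, ht⟩ := ha
      refine ⟨t * ((1:A) ⊗ₜ[ℂ] y), ?_⟩
      rw [hclosure, ht, Algebra.TensorProduct.tmul_mul_tmul, mul_one, one_mul]
  | add z1 z2 h1 h2 => exact R.add_mem h1 h2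

lemma T1'_apply (Δ : A →ₐ[ℂ] A ⊗[ℂ] A) (a b : A) :
    T1' Δ (a ⊗ₜ[ℂ] b) = Δ a * (b ⊗ₜ[ℂ] (1 : A)) := by
  simp [T1', LinearMap.mul'_apply]

lemma T2_apply (Δ : A →ₐ[ℂ] A ⊗[ℂ] A) (a b : A) :
    T2 Δ (a ⊗ₜ[ℂ] b) = (a ⊗ₜ[ℂ] (1 : A)) * Δ b := by
  simp [T2, LinearMap.mul'_apply]

lemma T2'_apply (Δ : A →ₐ[ℂ] A ⊗[ℂ] A) (a b : A) :
    T2' Δ (a ⊗ₜ[ℂ] b) = ((1 : A) ⊗ₜ[ℂ] a) * Δ b := by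
  simp [T2', LinearMap.mul'_apply]

lemma T1'_surjective (Δ : A →ₐ[ℂ] A ⊗[ℂ] A) (hΔ : IsCoassoc Δ) (hfull : IsFull Δ)
    (ψ : A →ₗ[ℂ] ℂ) (hψ : IsRightIntegral Δ ψ) (hψf : IsFaithful ψ) :
    Function.Surjective (T1' Δ) := by
  rw [← LinearMap.range_eq_top]
  set R := LinearMap.range (T1' Δ) with hRdef
  have h5core : ∀ (Y : A ⊗[ℂ] A) (u r s : A),
      TensorProduct.map (sliceL ψ) LinearMap.id
        ((TensorProduct.assoc ℂ A A A).symm (u ⊗ₜ[ℂ] Y) * ((r ⊗ₜ[ℂ] s) ⊗ₜ[ℂ] (1:A)))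
        = ψ (u * r) • (Y * (s ⊗ₜ[ℂ] (1:A))) := by
    intro Y u r s
    induction Y using TensorProduct.induction_on with
    | zero => simp
    | tmul y1 y2 =>
        simp [Algebra.TensorProduct.tmul_mul_tmul, sliceL_tmul, tmul_smul, smul_tmul',
          TensorProduct.assoc_symm_tmul]
    | add s' t hs ht =>
        simp only [tmul_add, map_add, add_mul, hs, ht, smul_add]
  have key5 : ∀ X Q : A ⊗[ℂ] A,
      TensorProduct.map (sliceL ψ) LinearMap.id
        ((TensorProduct.assoc ℂ A A A).symm
            (TensorProduct.map LinearMap.id Δ.toLinearMap X) * (Q ⊗ₜ[ℂ] (1:A))) ∈ R := by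
    intro X Q
    induction X using TensorProduct.induction_on with
    | zero => simpa using R.zero_mem
    | tmul u v =>
        induction Q using TensorProduct.induction_on with
        | zero => simpa using R.zero_mem
        | tmul r s =>
            rw [TensorProduct.map_tmul]
            simp only [LinearMap.id_coe, id_eq, AlgHom.toLinearMap_apply]
            rw [h5core (Δ v) u r s]
            exact R.smul_mem _ (LinearMap.mem_range.mpr ⟨v ⊗ₜ[ℂ] s, T1'_apply Δ v s⟩)
        | add q1 q2 hq1 hq2 =>
            rw [TensorProduct.add_tmul, mul_add, map_add]
            exact R.add_mem hq1 hq2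
    | add x1 x2 h1 h2 =>
        rw [map_add, map_add, add_mul, map_add]
        exact R.add_mem h1 h2
  have hcol : ∀ X : A ⊗[ℂ] A,
      TensorProduct.map (sliceL ψ) LinearMap.id
        (TensorProduct.map Δ.toLinearMap LinearMap.id X) = (1:A) ⊗ₜ[ℂ] (sliceL ψ X) := by
    intro X
    induction X using TensorProduct.induction_on with
    | zero => simp
    | tmul u v =>
        rw [TensorProduct.map_tmul, TensorProduct.map_tmul]
        simp only [LinearMap.id_coe, id_eq, AlgHom.toLinearMap_apply]
        rw [hψ.2 u, sliceL_tmul, ← smul_tmul', tmul_smul]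
    | add x1 x2 h1 h2 => rw [map_add, map_add, h1, h2, map_add, tmul_add]
  have hmul : ∀ (X : A ⊗[ℂ] A) (q : A),
      TensorProduct.map Δ.toLinearMap LinearMap.id (X * (q ⊗ₜ[ℂ] (1:A)))
        = TensorProduct.map Δ.toLinearMap LinearMap.id X * ((Δ q : A ⊗[ℂ] A) ⊗ₜ[ℂ] (1:A)) := by
    intro X q
    induction X using TensorProduct.induction_on with
    | zero => simp
    | tmul u v =>
        rw [Algebra.TensorProduct.tmul_mul_tmul, TensorProduct.map_tmul, TensorProduct.map_tmul]
        simp only [LinearMap.id_coe, id_eq, AlgHom.toLinearMap_apply]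
        rw [map_mul, Algebra.TensorProduct.tmul_mul_tmul]
    | add x1 x2 h1 h2 => rw [add_mul, map_add, h1, h2, map_add, add_mul]
  have hgen : ∀ x q : A, (1:A) ⊗ₜ[ℂ] (sliceL ψ (Δ x * (q ⊗ₜ[ℂ] (1:A)))) ∈ R := by
    intro x q
    rw [← hcol, hmul]
    have hx2 : TensorProduct.map Δ.toLinearMap LinearMap.id (Δ x)
        = (TensorProduct.assoc ℂ A A A).symm
            (TensorProduct.map LinearMap.id Δ.toLinearMap (Δ x)) := by
      rw [← hΔ x, LinearEquiv.symm_apply_apply]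
    rw [hx2]
    exact key5 (Δ x) (Δ q)
  have hspan : Submodule.span ℂ
      {y : A | ∃ x q : A, y = sliceL ψ (Δ x * (q ⊗ₜ[ℂ] (1:A)))} = ⊤ := by
    apply span_eq_top_of_dual
    intro χ hχ
    have h1 : ∀ (X : A ⊗[ℂ] A) (q : A),
        χ (sliceL ψ (X * (q ⊗ₜ[ℂ] (1:A)))) = ψ (sliceR χ X * q) := by
      intro X q
      induction X using TensorProduct.induction_on with
      | zero => simp
      | tmul u v =>
          rw [Algebra.TensorProduct.tmul_mul_tmul, sliceL_tmul, sliceR_tmul]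
          simp [smul_mul_assoc, mul_comm]
      | add x1 x2 hx1 hx2 => rw [add_mul, map_add, map_add, hx1, hx2,
          map_add, add_mul, map_add]
    have h2 : ∀ x : A, sliceR χ (Δ x) = 0 := by
      intro x
      apply hψf.2
      intro q
      rw [← h1]
      exact hχ _ ⟨x, q, rfl⟩
    have hker : Submodule.span ℂ
        {y : A | ∃ (a : A) (ω : A →ₗ[ℂ] ℂ), y = sliceL ω (Δ a)} ≤ LinearMap.ker χ := by
      rw [Submodule.span_le]
      rintro y ⟨x, ω, rfl⟩
      simp [LinearMap.mem_ker, ← slice_swap ω χ, h2 x]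
    refine LinearMap.ext fun a => ?_
    have ha : a ∈ rightLeg Δ := by rw [hfull.2]; trivial
    simpa using hker ha
  have hclosure : ∀ (t : A ⊗[ℂ] A) (y : A),
      T1' Δ (t * ((1:A) ⊗ₜ[ℂ] y)) = T1' Δ t * (y ⊗ₜ[ℂ] (1:A)) := by
    intro t y
    induction t using TensorProduct.induction_on with
    | zero => simp
    | tmul a b =>
        rw [Algebra.TensorProduct.tmul_mul_tmul, mul_one, T1'_apply, T1'_apply,
          mul_assoc, Algebra.TensorProduct.tmul_mul_tmul, mul_one]
    | add t1 t2 h1 h2 => rw [add_mul, map_add, h1, h2, map_add, add_mul]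
  rw [Submodule.eq_top_iff']
  intro z
  induction z using TensorProduct.induction_on with
  | zero => exact R.zero_mem
  | tmul y a =>
      have hmem : a ∈ Submodule.span ℂ
          {y : A | ∃ x q : A, y = sliceL ψ (Δ x * (q ⊗ₜ[ℂ] (1:A)))} := by
        rw [hspan]; trivial
      have ha : (1:A) ⊗ₜ[ℂ] a ∈ R := by
        refine Submodule.span_induction ?_ ?_ ?_ ?_ hmem
        · rintro s ⟨x, q, rfl⟩; exact hgen x q
        · simpa using R.zero_mem
        · intro x y _ _ hx hy; rw [tmul_add]; exact R.add_mem hx hy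
        · intro c x _ hx; rw [tmul_smul]; exact R.smul_mem c hx
      obtain ⟨t, ht⟩ := ha
      refine ⟨t * ((1:A) ⊗ₜ[ℂ] y), ?_⟩
      rw [hclosure, ht, Algebra.TensorProduct.tmul_mul_tmul, mul_one, one_mul]
  | add z1 z2 h1 h2 => exact R.add_mem h1 h2

lemma T2_surjective (Δ : A →ₐ[ℂ] A ⊗[ℂ] A) (hΔ : IsCoassoc Δ) (hfull : IsFull Δ)
    (ψ : A →ₗ[ℂ] ℂ) (hψ : IsRightIntegral Δ ψ) (hψf : IsFaithful ψ) :
    Function.Surjective (T2 Δ) := by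
  rw [← LinearMap.range_eq_top]
  set R := LinearMap.range (T2 Δ) with hRdef
  have h5core : ∀ (Y : A ⊗[ℂ] A) (u r s : A),
      TensorProduct.map (sliceL ψ) LinearMap.id
        (((r ⊗ₜ[ℂ] s) ⊗ₜ[ℂ] (1:A)) * (TensorProduct.assoc ℂ A A A).symm (u ⊗ₜ[ℂ] Y))
        = ψ (r * u) • ((s ⊗ₜ[ℂ] (1:A)) * Y) := by
    intro Y u r s
    induction Y using TensorProduct.induction_on with
    | zero => simp
    | tmul y1 y2 =>
        simp [Algebra.TensorProduct.tmul_mul_tmul, sliceL_tmul, tmul_smul, smul_tmul',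
          TensorProduct.assoc_symm_tmul]
    | add s' t hs ht =>
        simp only [tmul_add, map_add, mul_add, hs, ht, smul_add]
  have key5 : ∀ X Q : A ⊗[ℂ] A,
      TensorProduct.map (sliceL ψ) LinearMap.id
        ((Q ⊗ₜ[ℂ] (1:A)) * (TensorProduct.assoc ℂ A A A).symm
            (TensorProduct.map LinearMap.id Δ.toLinearMap X)) ∈ R := by
    intro X Q
    induction X using TensorProduct.induction_on with
    | zero => simpa using R.zero_mem
    | tmul u v =>
        induction Q using TensorProduct.induction_on with
        | zero => simpa using R.zero_mem
        | tmul r s =>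
            rw [TensorProduct.map_tmul]
            simp only [LinearMap.id_coe, id_eq, AlgHom.toLinearMap_apply]
            rw [h5core (Δ v) u r s]
            exact R.smul_mem _ (LinearMap.mem_range.mpr ⟨s ⊗ₜ[ℂ] v, T2_apply Δ s v⟩)
        | add q1 q2 hq1 hq2 =>
            rw [TensorProduct.add_tmul, add_mul, map_add]
            exact R.add_mem hq1 hq2
    | add x1 x2 h1 h2 =>
        rw [map_add, map_add, mul_add, map_add]
        exact R.add_mem h1 h2
  have hcol : ∀ X : A ⊗[ℂ] A,
      TensorProduct.map (sliceL ψ) LinearMap.id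
        (TensorProduct.map Δ.toLinearMap LinearMap.id X) = (1:A) ⊗ₜ[ℂ] (sliceL ψ X) := by
    intro X
    induction X using TensorProduct.induction_on with
    | zero => simp
    | tmul u v =>
        rw [TensorProduct.map_tmul, TensorProduct.map_tmul]
        simp only [LinearMap.id_coe, id_eq, AlgHom.toLinearMap_apply]
        rw [hψ.2 u, sliceL_tmul, ← smul_tmul', tmul_smul]
    | add x1 x2 h1 h2 => rw [map_add, map_add, h1, h2, map_add, tmul_add]
  have hmul : ∀ (X : A ⊗[ℂ] A) (q : A),
      TensorProduct.map Δ.toLinearMap LinearMap.id ((q ⊗ₜ[ℂ] (1:A)) * X)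
        = ((Δ q : A ⊗[ℂ] A) ⊗ₜ[ℂ] (1:A)) * TensorProduct.map Δ.toLinearMap LinearMap.id X := by
    intro X q
    induction X using TensorProduct.induction_on with
    | zero => simp
    | tmul u v =>
        rw [Algebra.TensorProduct.tmul_mul_tmul, TensorProduct.map_tmul, TensorProduct.map_tmul]
        simp only [LinearMap.id_coe, id_eq, AlgHom.toLinearMap_apply]
        rw [map_mul, Algebra.TensorProduct.tmul_mul_tmul]
    | add x1 x2 h1 h2 => rw [mul_add, map_add, h1, h2, map_add, mul_add]
  have hgen : ∀ x q : A, (1:A) ⊗ₜ[ℂ] (sliceL ψ ((q ⊗ₜ[ℂ] (1:A)) * Δ x)) ∈ R := by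
    intro x q
    rw [← hcol, hmul]
    have hx2 : TensorProduct.map Δ.toLinearMap LinearMap.id (Δ x)
        = (TensorProduct.assoc ℂ A A A).symm
            (TensorProduct.map LinearMap.id Δ.toLinearMap (Δ x)) := by
      rw [← hΔ x, LinearEquiv.symm_apply_apply]
    rw [hx2]
    exact key5 (Δ x) (Δ q)
  have hspan : Submodule.span ℂ
      {y : A | ∃ x q : A, y = sliceL ψ ((q ⊗ₜ[ℂ] (1:A)) * Δ x)} = ⊤ := by
    apply span_eq_top_of_dual
    intro χ hχ
    have h1 : ∀ (X : A ⊗[ℂ] A) (q : A),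
        χ (sliceL ψ ((q ⊗ₜ[ℂ] (1:A)) * X)) = ψ (q * sliceR χ X) := by
      intro X q
      induction X using TensorProduct.induction_on with
      | zero => simp
      | tmul u v =>
          rw [Algebra.TensorProduct.tmul_mul_tmul, sliceL_tmul, sliceR_tmul]
          simp [mul_smul_comm, mul_comm]
      | add x1 x2 hx1 hx2 => rw [mul_add, map_add, map_add, hx1, hx2,
          map_add, mul_add, map_add]
    have h2 : ∀ x : A, sliceR χ (Δ x) = 0 := by
      intro x
      apply hψf.1
      intro q
      rw [← h1]
      exact hχ _ ⟨x, q, rfl⟩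
    have hker : Submodule.span ℂ
        {y : A | ∃ (a : A) (ω : A →ₗ[ℂ] ℂ), y = sliceL ω (Δ a)} ≤ LinearMap.ker χ := by
      rw [Submodule.span_le]
      rintro y ⟨x, ω, rfl⟩
      simp [LinearMap.mem_ker, ← slice_swap ω χ, h2 x]
    refine LinearMap.ext fun a => ?_
    have ha : a ∈ rightLeg Δ := by rw [hfull.2]; trivial
    simpa using hker ha
  have hclosure : ∀ (t : A ⊗[ℂ] A) (y : A),
      T2 Δ ((y ⊗ₜ[ℂ] (1:A)) * t) = (y ⊗ₜ[ℂ] (1:A)) * T2 Δ t := by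
    intro t y
    induction t using TensorProduct.induction_on with
    | zero => simp
    | tmul a b =>
        rw [Algebra.TensorProduct.tmul_mul_tmul, one_mul, T2_apply, T2_apply,
          ← mul_assoc, Algebra.TensorProduct.tmul_mul_tmul, mul_one]
    | add t1 t2 h1 h2 => rw [mul_add, map_add, h1, h2, map_add, mul_add]
  rw [Submodule.eq_top_iff']
  intro z
  induction z using TensorProduct.induction_on with
  | zero => exact R.zero_mem
  | tmul y a =>
      have hmem : a ∈ Submodule.span ℂ
          {y : A | ∃ x q : A, y = sliceL ψ ((q ⊗ₜ[ℂ] (1:A)) * Δ x)} := by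
        rw [hspan]; trivial
      have ha : (1:A) ⊗ₜ[ℂ] a ∈ R := by
        refine Submodule.span_induction ?_ ?_ ?_ ?_ hmem
        · rintro s ⟨x, q, rfl⟩; exact hgen x q
        · simpa using R.zero_mem
        · intro x y _ _ hx hy; rw [tmul_add]; exact R.add_mem hx hy
        · intro c x _ hx; rw [tmul_smul]; exact R.smul_mem c hx
      obtain ⟨t, ht⟩ := ha
      refine ⟨(y ⊗ₜ[ℂ] (1:A)) * t, ?_⟩
      rw [hclosure, ht, Algebra.TensorProduct.tmul_mul_tmul, mul_one, one_mul]
  | add z1 z2 h1 h2 => exact R.add_mem h1 h2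

lemma T2'_surjective (Δ : A →ₐ[ℂ] A ⊗[ℂ] A) (hΔ : IsCoassoc Δ) (hfull : IsFull Δ)
    (φ : A →ₗ[ℂ] ℂ) (hφ : IsLeftIntegral Δ φ) (hφf : IsFaithful φ) :
    Function.Surjective (T2' Δ) := by
  rw [← LinearMap.range_eq_top]
  set R := LinearMap.range (T2' Δ) with hRdef
  have h5core : ∀ (Y : A ⊗[ℂ] A) (v r s : A),
      TensorProduct.map LinearMap.id (sliceR φ)
        (((1:A) ⊗ₜ[ℂ] (r ⊗ₜ[ℂ] s)) * (TensorProduct.assoc ℂ A A A (Y ⊗ₜ[ℂ] v)))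
        = φ (s * v) • (((1:A) ⊗ₜ[ℂ] r) * Y) := by
    intro Y v r s
    induction Y using TensorProduct.induction_on with
    | zero => simp
    | tmul y1 y2 =>
        simp [Algebra.TensorProduct.tmul_mul_tmul, sliceR_tmul, tmul_smul, smul_tmul',
          TensorProduct.assoc_tmul]
    | add s' t hs ht =>
        simp only [add_tmul, map_add, mul_add, hs, ht, smul_add]
  have key5 : ∀ X Q : A ⊗[ℂ] A,
      TensorProduct.map LinearMap.id (sliceR φ)
        (((1:A) ⊗ₜ[ℂ] Q) * (TensorProduct.assoc ℂ A A A
            (TensorProduct.map Δ.toLinearMap LinearMap.id X))) ∈ R := by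
    intro X Q
    induction X using TensorProduct.induction_on with
    | zero => simpa using R.zero_mem
    | tmul u v =>
        induction Q using TensorProduct.induction_on with
        | zero => simpa using R.zero_mem
        | tmul r s =>
            rw [TensorProduct.map_tmul]
            simp only [LinearMap.id_coe, id_eq, AlgHom.toLinearMap_apply]
            rw [h5core (Δ u) v r s]
            exact R.smul_mem _ (LinearMap.mem_range.mpr ⟨r ⊗ₜ[ℂ] u, T2'_apply Δ r u⟩)
        | add q1 q2 hq1 hq2 =>
            rw [TensorProduct.tmul_add, add_mul, map_add]
            exact R.add_mem hq1 hq2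
    | add x1 x2 h1 h2 =>
        rw [map_add, map_add, mul_add, map_add]
        exact R.add_mem h1 h2
  have hcol : ∀ X : A ⊗[ℂ] A,
      TensorProduct.map LinearMap.id (sliceR φ)
        (TensorProduct.map LinearMap.id Δ.toLinearMap X) = (sliceR φ X) ⊗ₜ[ℂ] (1:A) := by
    intro X
    induction X using TensorProduct.induction_on with
    | zero => simp
    | tmul u v =>
        rw [TensorProduct.map_tmul, TensorProduct.map_tmul]
        simp only [LinearMap.id_coe, id_eq, AlgHom.toLinearMap_apply]
        rw [hφ.2 v, sliceR_tmul, tmul_smul, smul_tmul']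
    | add x1 x2 h1 h2 => rw [map_add, map_add, h1, h2, map_add, add_tmul]
  have hmul : ∀ (X : A ⊗[ℂ] A) (q : A),
      TensorProduct.map LinearMap.id Δ.toLinearMap (((1:A) ⊗ₜ[ℂ] q) * X)
        = ((1:A) ⊗ₜ[ℂ] (Δ q : A ⊗[ℂ] A)) * TensorProduct.map LinearMap.id Δ.toLinearMap X := by
    intro X q
    induction X using TensorProduct.induction_on with
    | zero => simp
    | tmul u v =>
        rw [Algebra.TensorProduct.tmul_mul_tmul, TensorProduct.map_tmul, TensorProduct.map_tmul]
        simp only [LinearMap.id_coe, id_eq, AlgHom.toLinearMap_apply]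
        rw [map_mul, Algebra.TensorProduct.tmul_mul_tmul]
    | add x1 x2 h1 h2 => rw [mul_add, map_add, h1, h2, map_add, mul_add]
  have hgen : ∀ x q : A, (sliceR φ (((1:A) ⊗ₜ[ℂ] q) * Δ x)) ⊗ₜ[ℂ] (1:A) ∈ R := by
    intro x q
    rw [← hcol, hmul, ← hΔ x]
    exact key5 (Δ x) (Δ q)
  have hspan : Submodule.span ℂ
      {y : A | ∃ x q : A, y = sliceR φ (((1:A) ⊗ₜ[ℂ] q) * Δ x)} = ⊤ := by
    apply span_eq_top_of_dual
    intro χ hχ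
    have h1 : ∀ (X : A ⊗[ℂ] A) (q : A),
        χ (sliceR φ (((1:A) ⊗ₜ[ℂ] q) * X)) = φ (q * sliceL χ X) := by
      intro X q
      induction X using TensorProduct.induction_on with
      | zero => simp
      | tmul u v =>
          rw [Algebra.TensorProduct.tmul_mul_tmul, sliceR_tmul, sliceL_tmul]
          simp [mul_smul_comm, mul_comm]
      | add x1 x2 hx1 hx2 => rw [mul_add, map_add, map_add, hx1, hx2,
          map_add, mul_add, map_add]
    have h2 : ∀ x : A, sliceL χ (Δ x) = 0 := by
      intro x
      apply hφf.1
      intro q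
      rw [← h1]
      exact hχ _ ⟨x, q, rfl⟩
    have hker : Submodule.span ℂ
        {y : A | ∃ (a : A) (ω : A →ₗ[ℂ] ℂ), y = sliceR ω (Δ a)} ≤ LinearMap.ker χ := by
      rw [Submodule.span_le]
      rintro y ⟨x, ω, rfl⟩
      simp [LinearMap.mem_ker, slice_swap, h2 x]
    refine LinearMap.ext fun a => ?_
    have ha : a ∈ leftLeg Δ := by rw [hfull.1]; trivial
    simpa using hker ha
  have hclosure : ∀ (t : A ⊗[ℂ] A) (y : A),
      T2' Δ ((y ⊗ₜ[ℂ] (1:A)) * t) = ((1:A) ⊗ₜ[ℂ] y) * T2' Δ t := by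
    intro t y
    induction t using TensorProduct.induction_on with
    | zero => simp
    | tmul a b =>
        rw [Algebra.TensorProduct.tmul_mul_tmul, one_mul, T2'_apply, T2'_apply,
          ← mul_assoc, Algebra.TensorProduct.tmul_mul_tmul, one_mul]
    | add t1 t2 h1 h2 => rw [mul_add, map_add, h1, h2, map_add, mul_add]
  rw [Submodule.eq_top_iff']
  intro z
  induction z using TensorProduct.induction_on with
  | zero => exact R.zero_mem
  | tmul a y =>
      have hmem : a ∈ Submodule.span ℂ
          {y : A | ∃ x q : A, y = sliceR φ (((1:A) ⊗ₜ[ℂ] q) * Δ x)} := by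
        rw [hspan]; trivial
      have ha : a ⊗ₜ[ℂ] (1:A) ∈ R := by
        refine Submodule.span_induction ?_ ?_ ?_ ?_ hmem
        · rintro s ⟨x, q, rfl⟩; exact hgen x q
        · simpa using R.zero_mem
        · intro x y _ _ hx hy; rw [add_tmul]; exact R.add_mem hx hy
        · intro c x _ hx; rw [← smul_tmul']; exact R.smul_mem c hx
      obtain ⟨t, ht⟩ := ha
      refine ⟨(y ⊗ₜ[ℂ] (1:A)) * t, ?_⟩
      rw [hclosure, ht, Algebra.TensorProduct.tmul_mul_tmul, mul_one, one_mul]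
  | add z1 z2 h1 h2 => exact R.add_mem h1 h2

/-- If `Δ` is full and there exist a faithful left integral and a faithful right integral,
then the four canonical maps are all surjective. -/
theorem four_canonical_maps_surjective
    (Δ : A →ₐ[ℂ] A ⊗[ℂ] A) (hΔ : IsCoassoc Δ) (hfull : IsFull Δ)
    (φ : A →ₗ[ℂ] ℂ) (hφ : IsLeftIntegral Δ φ) (hφf : IsFaithful φ)
    (ψ : A →ₗ[ℂ] ℂ) (hψ : IsRightIntegral Δ ψ) (hψf : IsFaithful ψ) :
    Function.Surjective (T1 Δ) ∧ Function.Surjective (T1' Δ) ∧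
      Function.Surjective (T2 Δ) ∧ Function.Surjective (T2' Δ) := by
  exact ⟨T1_surjective Δ hΔ hfull φ hφ hφf, T1'_surjective Δ hΔ hfull ψ hψ hψf,
    T2_surjective Δ hΔ hfull ψ hψ hψf, T2'_surjective Δ hΔ hfull φ hφ hφf⟩
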